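/- Let A be an m×m real skew-symmetric matrix in block form [[0,B],[−B^T,0]] with B of size m_1×m_2 (m = m_1 + m_2), let C be an n×n real skew-symmetric matrix, and let I' = diag(I_{m_1}, −I_{m_2}). Then the matrix S = I' ⊗ C + A ⊗ I_n is skew-symmetric, and the eigenvalues of S S^T are exactly μ² + λ² where iμ ranges over eigenvalues of A and iλ over eigenvalues of C (with multiplicity). -/

import Mathlib

/-!
`I'` squares to `1` and anticommutes with the off-diagonal `A`, so the cross terms of `S²` cancel
and `S Sᵀ = -S² = (-A²) ⊗ 1 + 1 ⊗ (-C²)`. Over `ℂ` the skew-symmetric `A` and `C` are unitarily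
diagonalizable (`i A` and `i C` are Hermitian), say `A = U D U*` and `C = V E V*`; then `U ⊗ V`
diagonalizes `S Sᵀ`, with diagonal entries `-α² - β²` for `α` on the diagonal of `D` and `β` on
that of `E`.
-/

open Matrix Kronecker

noncomputable def cSpec {V : Type*} [Fintype V] [DecidableEq V]
    (S : Matrix V V ℝ) : Multiset ℂ :=
  ((S.map (Complex.ofReal)).charpoly).roots

theorem Multiset.map_univ_val_prod {ι κ α : Type*} [Fintype ι] [Fintype κ] (f : ι → κ → α) :
    (Finset.univ.val : Multiset (ι × κ)).map (fun p => f p.1 p.2)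
      = Finset.univ.val.bind fun i => Finset.univ.val.map (f i) := by
  rw [← Finset.univ_product_univ, Finset.product_val]
  simp only [SProd.sprod, Multiset.product, Multiset.map_bind, Multiset.map_map]
  rfl

namespace Matrix

variable {ι κ l m n p R : Type*}

theorem neg_kronecker [Mul R] [HasDistribNeg R] (A : Matrix l m R) (B : Matrix n p R) :
    (-A) ⊗ₖ B = -(A ⊗ₖ B) := by
  ext; simp

theorem kronecker_neg [Mul R] [HasDistribNeg R] (A : Matrix l m R) (B : Matrix n p R) :
    A ⊗ₖ (-B) = -(A ⊗ₖ B) := by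
  ext; simp

theorem map_kronecker {S : Type*} [Mul R] [Mul S] (f : R → S) (hf : ∀ a b, f (a * b) = f a * f b)
    (A : Matrix l m R) (B : Matrix n p R) : (A ⊗ₖ B).map f = A.map f ⊗ₖ B.map f := by
  ext; simp [hf]

theorem transpose_kronecker_add_kronecker_one [Ring R] [DecidableEq κ] {P A : Matrix ι ι R}
    {C : Matrix κ κ R} (hP : Pᵀ = P) (hA : Aᵀ = -A) (hC : Cᵀ = -C) :
    (P ⊗ₖ C + A ⊗ₖ (1 : Matrix κ κ R))ᵀ = -(P ⊗ₖ C + A ⊗ₖ 1) := by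
  rw [transpose_add, ← kroneckerMap_transpose, ← kroneckerMap_transpose, hP, hA, hC,
    transpose_one, kronecker_neg, neg_kronecker, neg_add]

theorem kronecker_add_kronecker_one_sq [CommRing R] [Fintype ι] [DecidableEq ι] [Fintype κ]
    [DecidableEq κ] {P A : Matrix ι ι R} (C : Matrix κ κ R) (hP : P * P = 1)
    (hPA : P * A = -(A * P)) :
    (P ⊗ₖ C + A ⊗ₖ (1 : Matrix κ κ R)) ^ 2 = (A ^ 2) ⊗ₖ 1 + 1 ⊗ₖ (C ^ 2) := by
  simp only [sq, add_mul, mul_add, ← mul_kronecker_mul, hP, hPA, Matrix.mul_one, Matrix.one_mul,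
    neg_kronecker]
  abel

theorem diagonal_kronecker_one_add_one_kronecker_diagonal [NonAssocSemiring R] [DecidableEq ι]
    [DecidableEq κ] (d : ι → R) (e : κ → R) :
    diagonal d ⊗ₖ (1 : Matrix κ κ R) + (1 : Matrix ι ι R) ⊗ₖ diagonal e
      = diagonal fun p => d p.1 + e p.2 := by
  rw [← diagonal_one, ← diagonal_one, diagonal_kronecker_diagonal, diagonal_kronecker_diagonal,
    diagonal_add]
  simp

section Blocks

variable [Ring R] [Fintype ι] [DecidableEq ι] [Fintype κ] [DecidableEq κ]

theorem fromBlocks_one_zero_zero_neg_one_mul_self :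
    fromBlocks (1 : Matrix ι ι R) 0 0 (-1 : Matrix κ κ R) * fromBlocks 1 0 0 (-1) = 1 := by
  simp [fromBlocks_multiply, fromBlocks_one]

theorem fromBlocks_one_zero_zero_neg_one_anticomm (B : Matrix ι κ R) (C : Matrix κ ι R) :
    fromBlocks 1 0 0 (-1) * fromBlocks 0 B C 0 = -(fromBlocks 0 B C 0 * fromBlocks 1 0 0 (-1)) := by
  simp [fromBlocks_multiply, fromBlocks_neg]

end Blocks

open Unitary

variable [Fintype ι] [DecidableEq ι] [Fintype κ] [DecidableEq κ]

def IsUnitarilyDiagonalizable [CommRing R] [StarRing R] (M : Matrix ι ι R) (d : ι → R) : Prop :=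
  ∃ U : unitary (Matrix ι ι R), M = conjStarAlgAut R _ U (diagonal d)

namespace IsUnitarilyDiagonalizable

section CommRing

variable [CommRing R] [StarRing R] {M : Matrix ι ι R} {d : ι → R}

theorem pow (h : IsUnitarilyDiagonalizable M d) (k : ℕ) :
    IsUnitarilyDiagonalizable (M ^ k) (d ^ k) := by
  obtain ⟨U, rfl⟩ := h
  exact ⟨U, by rw [← diagonal_pow, map_pow]⟩

theorem neg (h : IsUnitarilyDiagonalizable M d) : IsUnitarilyDiagonalizable (-M) (-d) := by
  obtain ⟨U, rfl⟩ := h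
  exact ⟨U, by rw [← map_neg, diagonal_neg]; rfl⟩

theorem smul (h : IsUnitarilyDiagonalizable M d) (c : R) :
    IsUnitarilyDiagonalizable (c • M) (c • d) := by
  obtain ⟨U, rfl⟩ := h
  exact ⟨U, by rw [diagonal_smul, map_smul]⟩

theorem kronecker_one_add_one_kronecker {N : Matrix κ κ R} {e : κ → R}
    (hM : IsUnitarilyDiagonalizable M d) (hN : IsUnitarilyDiagonalizable N e) :
    IsUnitarilyDiagonalizable (M ⊗ₖ 1 + 1 ⊗ₖ N) fun p => d p.1 + e p.2 := by
  obtain ⟨U, rfl⟩ := hM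
  obtain ⟨V, rfl⟩ := hN
  refine ⟨⟨U ⊗ₖ V, kronecker_mem_unitary U.2 V.2⟩, ?_⟩
  rw [← diagonal_kronecker_one_add_one_kronecker_diagonal]
  simp only [conjStarAlgAut_apply, star_eq_conjTranspose, conjTranspose_kronecker]
  simp only [mul_add, add_mul, ← mul_kronecker_mul, Matrix.mul_one, ← star_eq_conjTranspose,
    mul_star_self_of_mem U.2, mul_star_self_of_mem V.2]

theorem roots_charpoly [IsDomain R] (h : IsUnitarilyDiagonalizable M d) :
    M.charpoly.roots = Finset.univ.val.map d := by
  obtain ⟨U, rfl⟩ := h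
  rw [conjStarAlgAut_apply, charpoly_mul_comm, ← mul_assoc, coe_star_mul_self, one_mul,
    charpoly_diagonal, Polynomial.roots_prod _ _
      (Finset.prod_ne_zero_iff.mpr fun i _ => Polynomial.X_sub_C_ne_zero _)]
  simp

end CommRing

theorem of_isHermitian {𝕜 : Type*} [RCLike 𝕜] {A : Matrix ι ι 𝕜} (hA : A.IsHermitian) :
    IsUnitarilyDiagonalizable A (RCLike.ofReal ∘ hA.eigenvalues) :=
  ⟨_, hA.spectral_theorem⟩

theorem exists_of_conjTranspose_eq_neg {A : Matrix ι ι ℂ} (hA : Aᴴ = -A) :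
    ∃ d, IsUnitarilyDiagonalizable A d := by
  have hIA : (Complex.I • A).IsHermitian := by
    rw [IsHermitian, conjTranspose_smul, hA, Complex.star_def, Complex.conj_I, neg_smul, smul_neg,
      neg_neg]
  have h := (of_isHermitian hIA).smul (-Complex.I)
  rw [smul_smul, neg_mul, Complex.I_mul_I, neg_neg, one_smul] at h
  exact ⟨_, h⟩

end IsUnitarilyDiagonalizable

theorem exists_isUnitarilyDiagonalizable_map_ofReal {A : Matrix ι ι ℝ} (hA : Aᵀ = -A) :
    ∃ d, (A.map Complex.ofReal).IsUnitarilyDiagonalizable d :=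
  IsUnitarilyDiagonalizable.exists_of_conjTranspose_eq_neg <| by
    rw [← conjTranspose_map _ fun _ => (Complex.conj_ofReal _).symm,
      conjTranspose_eq_transpose_of_trivial, hA, Matrix.map_neg _ Complex.ofReal_neg]

theorem map_ofReal_pow (M : Matrix ι ι ℝ) (k : ℕ) :
    (M ^ k).map Complex.ofReal = M.map Complex.ofReal ^ k :=
  map_pow Complex.ofRealHom.mapMatrix M k

end Matrix

/-- Let `A = [[0, B], [-Bᵀ, 0]]` be skew-symmetric, `C` skew-symmetric and
`I' = diag(I, -I)`.  Then `S = I' ⊗ C + A ⊗ I` is skew-symmetric, and the eigenvalues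
of `S Sᵀ` are exactly the values `μ² + λ²` where `iμ` ranges over the eigenvalues `α`
of `A` (so `μ² = -α²`) and `iλ` over the eigenvalues `β` of `C` (so `λ² = -β²`),
with multiplicity. -/
theorem kronecker_skew_SSt_spectrum
    (m₁ m₂ n : ℕ)
    (B : Matrix (Fin m₁) (Fin m₂) ℝ)
    (C : Matrix (Fin n) (Fin n) ℝ) (hC : Cᵀ = -C) :
    let A : Matrix (Fin m₁ ⊕ Fin m₂) (Fin m₁ ⊕ Fin m₂) ℝ :=
      Matrix.fromBlocks 0 B (-Bᵀ) 0
    let I' : Matrix (Fin m₁ ⊕ Fin m₂) (Fin m₁ ⊕ Fin m₂) ℝ :=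
      Matrix.fromBlocks 1 0 0 (-1)
    let S := I' ⊗ₖ C + A ⊗ₖ (1 : Matrix (Fin n) (Fin n) ℝ)
    Sᵀ = -S ∧
    cSpec (S * Sᵀ) = (cSpec A).bind (fun α => (cSpec C).map (fun β => -α ^ 2 - β ^ 2)) := by
  intro A I' S
  have hA : Aᵀ = -A := by simp [A, fromBlocks_transpose, fromBlocks_neg]
  have hI' : I'ᵀ = I' := by simp [I', fromBlocks_transpose]
  have hS : Sᵀ = -S := transpose_kronecker_add_kronecker_one hI' hA hC
  refine ⟨hS, ?_⟩
  have hSSt : S * Sᵀ = (-A ^ 2) ⊗ₖ 1 + 1 ⊗ₖ (-C ^ 2) := by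
    rw [hS, mul_neg, ← sq, kronecker_add_kronecker_one_sq C
      fromBlocks_one_zero_zero_neg_one_mul_self (fromBlocks_one_zero_zero_neg_one_anticomm _ _),
      neg_add, neg_kronecker, kronecker_neg]
  obtain ⟨a, ha⟩ := exists_isUnitarilyDiagonalizable_map_ofReal hA
  obtain ⟨c, hc⟩ := exists_isUnitarilyDiagonalizable_map_ofReal hC
  have hSSt_diag : ((S * Sᵀ).map Complex.ofReal).IsUnitarilyDiagonalizable
      fun p => -a p.1 ^ 2 - c p.2 ^ 2 := by
    simp only [hSSt, Matrix.map_add _ Complex.ofReal_add, map_kronecker _ Complex.ofReal_mul,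
      Matrix.map_neg _ Complex.ofReal_neg, map_ofReal_pow,
      Matrix.map_one _ Complex.ofReal_zero Complex.ofReal_one]
    simpa [sub_eq_add_neg] using (ha.pow 2).neg.kronecker_one_add_one_kronecker (hc.pow 2).neg
  rw [cSpec, cSpec, cSpec, hSSt_diag.roots_charpoly, ha.roots_charpoly, hc.roots_charpoly,
    Multiset.map_univ_val_prod fun i j => -a i ^ 2 - c j ^ 2, Multiset.bind_map]
  simp only [Multiset.map_map]
  rfl
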